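/- arXiv:0706.2795 — 5 statements merged into one kernel-verified Lean document; each statement's English description precedes it below -/
import Mathlib

section
/- Let σ_h > 0 and σ_ℰ > 0, let H be a real random variable with law gaussianReal 0 σ_h² and ℰ an independent real random variable with law gaussianReal 0 σ_ℰ², and set Ĥ = H + ℰ. Then the conditional distribution of H given Ĥ satisfies: for almost every value ĥ of Ĥ (with respect to the law of Ĥ, which is gaussianReal 0 (σ_h²+σ_ℰ²)), the conditional law of H given Ĥ = ĥ is the Gaussian distribution gaussianReal (δ·ĥ) (δ·σ_ℰ²), where δ = σ_h²/(σ_h² + σ_ℰ²). -/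
open MeasureTheory ProbabilityTheory
open scoped NNReal ENNReal

/-!
Writing `Ĥ = H + ℰ`, the joint law of `(H, Ĥ)` is the prior `N(0, σ_h²)` composed with the kernel
`h ↦ N(h, σ_ℰ²)`, so it has the density `φ_{σ_h²}(h) φ_{σ_ℰ²}(ĥ - h)` on `ℝ²`. Completing the
square in `h` rewrites this product as `φ_{σ_h²+σ_ℰ²}(ĥ) φ_{δσ_ℰ²}(h - δĥ)`, which is the density of
`N(0, σ_h²+σ_ℰ²) ⊗ (ĥ ↦ N(δĥ, δσ_ℰ²))`. By uniqueness of disintegrations, the second factor is the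
conditional law of `H` given `Ĥ`.
-/

namespace ProbabilityTheory

noncomputable def linearGaussianKernel (c m : ℝ) (v : ℝ≥0) : Kernel ℝ ℝ where
  toFun x := gaussianReal (c * x + m) v
  measurable' := by fun_prop

@[simp]
lemma linearGaussianKernel_apply (c m : ℝ) (v : ℝ≥0) (x : ℝ) :
    linearGaussianKernel c m v x = gaussianReal (c * x + m) v := rfl

instance (c m : ℝ) (v : ℝ≥0) : IsMarkovKernel (linearGaussianKernel c m v) :=
  ⟨fun x => by rw [linearGaussianKernel_apply]; infer_instance⟩

@[fun_prop]
lemma _root_.Measurable.gaussianPDF {α : Type*} [MeasurableSpace α] {f g : α → ℝ}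
    (hf : Measurable f) (hg : Measurable g) (v : ℝ≥0) :
    Measurable fun a => gaussianPDF (f a) v (g a) := by
  unfold ProbabilityTheory.gaussianPDF gaussianPDFReal
  fun_prop

lemma linearGaussianKernel_eq_withDensity (c m : ℝ) {v : ℝ≥0} (hv : v ≠ 0) :
    linearGaussianKernel c m v
      = (Kernel.const ℝ volume).withDensity (fun x y => gaussianPDF (c * x + m) v y) := by
  ext x : 1
  rw [Kernel.withDensity_apply _ (by fun_prop),
    Kernel.const_apply, linearGaussianKernel_apply, gaussianReal_of_var_ne_zero _ hv]

lemma gaussianReal_compProd_linearGaussianKernel (m₀ c m : ℝ) {v₀ v : ℝ≥0} (hv₀ : v₀ ≠ 0)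
    (hv : v ≠ 0) :
    gaussianReal m₀ v₀ ⊗ₘ linearGaussianKernel c m v
      = (volume.prod volume).withDensity
          (fun p => gaussianPDF m₀ v₀ p.1 * gaussianPDF (c * p.1 + m) v p.2) := by
  have hK := linearGaussianKernel_eq_withDensity c m hv
  have : IsSFiniteKernel ((Kernel.const ℝ volume).withDensity
      (fun x y => gaussianPDF (c * x + m) v y)) := hK ▸ inferInstance
  rw [hK, Measure.compProd_withDensity, Measure.compProd_const, gaussianReal_of_var_ne_zero _ hv₀,
    prod_withDensity_left (measurable_gaussianPDF _ _), ← withDensity_mul]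
  · rfl
  all_goals fun_prop

lemma gaussianPDFReal_mul_gaussianPDFReal {v₁ v₂ : ℝ≥0} (hv₁ : v₁ ≠ 0) (hv₂ : v₂ ≠ 0)
    (m h x : ℝ) :
    gaussianPDFReal m v₁ h * gaussianPDFReal h v₂ x
      = gaussianPDFReal m (v₁ + v₂) x *
        gaussianPDFReal ((v₁ / (v₁ + v₂) : ℝ≥0) * x + (v₂ / (v₁ + v₂) : ℝ≥0) * m)
          (v₁ / (v₁ + v₂) * v₂) h := by
  have h₁ : (0 : ℝ) < v₁ := by positivity
  have h₂ : (0 : ℝ) < v₂ := by positivity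
  simp only [gaussianPDFReal, NNReal.coe_mul, NNReal.coe_div, NNReal.coe_add]
  rw [mul_mul_mul_comm, mul_mul_mul_comm (√(2 * Real.pi * (v₁ + v₂)))⁻¹, ← Real.exp_add,
    ← Real.exp_add, ← mul_inv, ← mul_inv, ← Real.sqrt_mul (by positivity),
    ← Real.sqrt_mul (by positivity)]
  congr 2
  · field_simp
  · field_simp
    ring

lemma gaussianPDF_mul_gaussianPDF {v₁ v₂ : ℝ≥0} (hv₁ : v₁ ≠ 0) (hv₂ : v₂ ≠ 0) (m h x : ℝ) :
    gaussianPDF m v₁ h * gaussianPDF h v₂ x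
      = gaussianPDF m (v₁ + v₂) x *
        gaussianPDF ((v₁ / (v₁ + v₂) : ℝ≥0) * x + (v₂ / (v₁ + v₂) : ℝ≥0) * m)
          (v₁ / (v₁ + v₂) * v₂) h := by
  simp only [gaussianPDF, ← ENNReal.ofReal_mul (gaussianPDFReal_nonneg _ _ _),
    gaussianPDFReal_mul_gaussianPDFReal hv₁ hv₂]

lemma map_swap_withDensity_prod {α β : Type*} [MeasurableSpace α] [MeasurableSpace β]
    (μ : Measure α) (ν : Measure β) [SFinite μ] [SFinite ν] (f : α × β → ℝ≥0∞) :
    ((μ.prod ν).withDensity f).map Prod.swap = (ν.prod μ).withDensity (f ∘ Prod.swap) := by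
  ext s hs
  rw [Measure.map_apply measurable_swap hs, withDensity_apply _ (measurable_swap hs),
    withDensity_apply _ hs]
  exact Measure.measurePreserving_swap.setLIntegral_comp_preimage_emb
    MeasurableEquiv.prodComm.measurableEmbedding (f ∘ Prod.swap) s

lemma map_swap_gaussianReal_compProd_linearGaussianKernel (m : ℝ) {v₁ v₂ : ℝ≥0}
    (hv₁ : v₁ ≠ 0) (hv₂ : v₂ ≠ 0) :
    (gaussianReal m v₁ ⊗ₘ linearGaussianKernel 1 0 v₂).map Prod.swap
      = gaussianReal m (v₁ + v₂) ⊗ₘ linearGaussianKernel (v₁ / (v₁ + v₂) : ℝ≥0)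
          ((v₂ / (v₁ + v₂) : ℝ≥0) * m) (v₁ / (v₁ + v₂) * v₂) := by
  have hv : v₁ / (v₁ + v₂) * v₂ ≠ 0 := by positivity
  rw [gaussianReal_compProd_linearGaussianKernel _ _ _ hv₁ hv₂,
    gaussianReal_compProd_linearGaussianKernel _ _ _ (by positivity) hv,
    map_swap_withDensity_prod]
  congr 1
  ext p
  simp [gaussianPDF_mul_gaussianPDF hv₁ hv₂]

lemma map_prod_add_eq_compProd_linearGaussianKernel (ν : Measure ℝ) [SFinite ν] (m : ℝ)
    (v : ℝ≥0) :
    (ν.prod (gaussianReal m v)).map (fun p => (p.1, p.1 + p.2))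
      = ν ⊗ₘ linearGaussianKernel 1 m v := by
  have hshear : Measurable fun p : ℝ × ℝ => (p.1, p.1 + p.2) := by fun_prop
  ext s hs
  rw [Measure.map_apply hshear hs, Measure.prod_apply (hshear hs), Measure.compProd_apply hs]
  refine lintegral_congr fun x => ?_
  have hsx : MeasurableSet (Prod.mk x ⁻¹' s) := measurable_prodMk_left hs
  rw [linearGaussianKernel_apply, one_mul, add_comm x m, ← gaussianReal_map_const_add x,
    Measure.map_apply (measurable_const_add x) hsx]
  rfl

end ProbabilityTheory

/-- The a posteriori law of a Gaussian channel `H` given the noisy estimate `Ĥ = H + ℰ`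
is Gaussian with mean `δ·Ĥ` and variance `δ·σ_ℰ²`, where `δ = σ_h²/(σ_h²+σ_ℰ²)`. -/
theorem posterior_gaussian_given_noisy_estimate {Ω : Type*} [MeasurableSpace Ω]
    (μ : Measure Ω) [IsProbabilityMeasure μ]
    (σh σε : NNReal) (hσh : 0 < σh) (hσε : 0 < σε)
    (H E : Ω → ℝ) (hH : Measurable H) (hE : Measurable E)
    (hlawH : μ.map H = gaussianReal 0 (σh ^ 2))
    (hlawE : μ.map E = gaussianReal 0 (σε ^ 2))
    (hindep : IndepFun H E μ)
    (Hhat : Ω → ℝ) (hHhat : Hhat = H + E)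
    (δ : NNReal) (hδ : δ = σh ^ 2 / (σh ^ 2 + σε ^ 2)) :
    μ.map Hhat = gaussianReal 0 (σh ^ 2 + σε ^ 2) ∧
      ∀ᵐ hv ∂(μ.map Hhat),
        condDistrib H Hhat μ hv = gaussianReal ((δ : ℝ) * hv) (δ * σε ^ 2) := by
  have hlawHhat : μ.map Hhat = gaussianReal 0 (σh ^ 2 + σε ^ 2) := by
    simpa [hHhat] using gaussianReal_add_gaussianReal_of_indepFun hindep hlawH hlawE
  have hjoint : μ.map (fun ω => (Hhat ω, H ω))
      = μ.map Hhat ⊗ₘ linearGaussianKernel δ 0 (δ * σε ^ 2) := by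
    have hlawHE : μ.map (fun ω => (H ω, E ω))
        = (gaussianReal 0 (σh ^ 2)).prod (gaussianReal 0 (σε ^ 2)) := by
      rw [← hlawH, ← hlawE]
      exact (indepFun_iff_map_prod_eq_prod_map_map hH.aemeasurable hE.aemeasurable).mp hindep
    have hcomp : (fun ω => (Hhat ω, H ω))
        = Prod.swap ∘ (fun p : ℝ × ℝ => (p.1, p.1 + p.2)) ∘ (fun ω => (H ω, E ω)) := by
      subst hHhat; rfl
    rw [hcomp, ← Measure.map_map (by fun_prop) (by fun_prop),
      ← Measure.map_map (by fun_prop) (by fun_prop), hlawHE,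
      map_prod_add_eq_compProd_linearGaussianKernel,
      map_swap_gaussianReal_compProd_linearGaussianKernel 0 (by positivity) (by positivity),
      hlawHhat, hδ, mul_zero]
  refine ⟨hlawHhat, ?_⟩
  filter_upwards [condDistrib_ae_eq_of_measure_eq_compProd Hhat hH.aemeasurable hjoint] with x hx
  simp [hx]
end

section
/- Let P, Q, N be strictly positive reals and f(α) = P·Q·(1−α)² + N·(P + α²Q). Then f(P/(P+N)) = N·P·(P+Q+N)/(P+N), and consequently P·(P+Q+N) / f(P/(P+N)) = 1 + P/N. -/
/-- Value of the DPC denominator at the optimal parameter `α* = P/(P+N)`: the resulting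
signal-to-noise ratio term equals `1 + P/N` (full interference cancellation). -/
theorem dpc_optimal_value (P Q N : ℝ) (hP : 0 < P) (hQ : 0 < Q) (hN : 0 < N)
    (f : ℝ → ℝ)
    (hf : ∀ α, f α = P * Q * (1 - α) ^ 2 + N * (P + α ^ 2 * Q)) :
    f (P / (P + N)) = N * P * (P + Q + N) / (P + N) ∧
      P * (P + Q + N) / f (P / (P + N)) = 1 + P / N := by
  have hPN : P + N ≠ 0 := by positivity
  have h1 : f (P / (P + N)) = N * P * (P + Q + N) / (P + N) := by
    rw [hf]; field_simp; ring
  refine ⟨h1, ?_⟩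
  rw [h1]
  have hnum : N * P * (P + Q + N) ≠ 0 := by positivity
  field_simp
  ring
end

section
/- Let P, Q, N be strictly positive reals. Then for every α ∈ ℝ, P·(P+Q+N) / (P·Q·(1−α)² + N·(P + α²Q)) ≤ 1 + P/N, with equality if and only if α = P/(P+N). -/
/-- The DPC SNR term is at most `1 + P/N` for any parameter `α`, with equality
iff `α = P/(P+N)`. -/
theorem dpc_snr_upper_bound (P Q N : ℝ) (hP : 0 < P) (hQ : 0 < Q) (hN : 0 < N) :
    ∀ α : ℝ,
      P * (P + Q + N) / (P * Q * (1 - α) ^ 2 + N * (P + α ^ 2 * Q)) ≤ 1 + P / N ∧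
      (P * (P + Q + N) / (P * Q * (1 - α) ^ 2 + N * (P + α ^ 2 * Q)) = 1 + P / N
        ↔ α = P / (P + N)) := by
  intro α
  have hPN : 0 < P + N := by linarith
  have hD : 0 < P * Q * (1 - α) ^ 2 + N * (P + α ^ 2 * Q) := by positivity
  have key : (1 + P / N) * (P * Q * (1 - α) ^ 2 + N * (P + α ^ 2 * Q))
      = P * (P + Q + N) + (Q * (P + N) ^ 2 / N) * (α - P / (P + N)) ^ 2 := by
    field_simp
    ring
  constructor
  · rw [div_le_iff₀ hD]
    nlinarith [sq_nonneg (α - P / (P + N)), mul_pos hQ (mul_pos hPN hPN),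
      div_nonneg (mul_nonneg hQ.le (sq_nonneg (P + N))) hN.le,
      mul_nonneg (div_nonneg (mul_nonneg hQ.le (sq_nonneg (P + N))) hN.le)
        (sq_nonneg (α - P / (P + N)))]
  · rw [div_eq_iff hD.ne']
    constructor
    · intro h
      have h2 : (Q * (P + N) ^ 2 / N) * (α - P / (P + N)) ^ 2 = 0 := by linarith [key, h]
      have hc : Q * (P + N) ^ 2 / N ≠ 0 := by positivity
      have := (mul_eq_zero.mp h2).resolve_left hc
      have := pow_eq_zero_iff (n := 2) (by norm_num) |>.mp this
      linarith [this]
    · intro h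
      rw [key, h]
      ring
end

section
/- Let λ, a, b be strictly positive reals. Then ∫₀^∞ λ e^{−λx} · ln(a·x + b) dx = ln(b) + e^{λb/a} · E₁(λb/a), where E₁(z) = ∫_z^∞ t^{−1} e^{−t} dt. -/
/-!
Integrate by parts against the antiderivative `-exp (-(λ x))` of the exponential density: the
boundary term at `0` is `log b` and the one at `∞` vanishes because `log (a x + b)` grows
slower than `exp (λ x / 2)`, leaving `∫₀^∞ exp (-(λ x)) · a / (a x + b) dx`. Since
`a / (a x + b)` equals `λ / t` for `t = λ x + λ b / a`, the substitution `x ↦ t` turns this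
into `exp (λ b / a) · E₁ (λ b / a)`.
-/

open MeasureTheory Set Real Filter Asymptotics
open scoped Topology

lemma tendsto_mul_add_atTop {a : ℝ} (ha : 0 < a) (b : ℝ) :
    Tendsto (fun x => a * x + b) atTop atTop :=
  tendsto_atTop_add_const_right _ b (tendsto_id.const_mul_atTop ha)

lemma isBigO_log_mul_add_exp {a c : ℝ} (ha : 0 < a) (b : ℝ) (hc : 0 < c) :
    (fun x => log (a * x + b)) =O[atTop] fun x => exp (c * x) := by
  have h_id : (fun x : ℝ => x) =O[atTop] fun x => exp (c * x) := by
    simpa using (isLittleO_pow_exp_pos_mul_atTop 1 hc).isBigO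
  have h_lin : (fun x => a * x + b) =O[atTop] fun x => exp (c * x) :=
    ((isBigO_refl _ _).const_mul_left a |>.add (isLittleO_const_id_atTop b).isBigO).trans h_id
  exact (isLittleO_log_id_atTop.comp_tendsto (tendsto_mul_add_atTop ha b)).isBigO.trans h_lin

lemma isBigO_div_mul_add_exp_zero {a : ℝ} (ha : 0 < a) (b : ℝ) :
    (fun x => a / (a * x + b)) =O[atTop] fun x => exp (0 * x) := by
  simpa using ((tendsto_const_nhds (x := a)).div_atTop (tendsto_mul_add_atTop ha b)).isBigO_one ℝ

section ExpDecay

variable {g : ℝ → ℝ} {lam c : ℝ}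

lemma isBigO_exp_neg_mul_mul (hg : g =O[atTop] fun x => exp (c * x)) :
    (fun x => exp (-(lam * x)) * g x) =O[atTop] fun x => exp (-(lam - c) * x) :=
  ((isBigO_refl (fun x => exp (-(lam * x))) atTop).mul hg).congr_right fun x => by
    rw [← exp_add]; ring_nf

lemma integrableOn_exp_neg_mul_mul {a : ℝ} (hc : c < lam) (hg_cont : ContinuousOn g (Ici a))
    (hg : g =O[atTop] fun x => exp (c * x)) :
    IntegrableOn (fun x => exp (-(lam * x)) * g x) (Ioi a) :=
  integrable_of_isBigO_exp_neg (sub_pos.2 hc)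
    ((by fun_prop : Continuous fun x => exp (-(lam * x))).continuousOn.mul hg_cont)
    (isBigO_exp_neg_mul_mul hg)

lemma tendsto_exp_neg_mul_mul_atTop (hc : c < lam) (hg : g =O[atTop] fun x => exp (c * x)) :
    Tendsto (fun x => exp (-(lam * x)) * g x) atTop (𝓝 0) :=
  (isBigO_exp_neg_mul_mul hg).trans_tendsto <| tendsto_exp_atBot.comp <|
    tendsto_id.const_mul_atTop_of_neg (neg_neg_iff_pos.2 (sub_pos.2 hc))

end ExpDecay

lemma hasDerivAt_exp_neg_mul_mul_log (lam a b : ℝ) {x : ℝ} (hx : a * x + b ≠ 0) :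
    HasDerivAt (fun x => exp (-(lam * x)) * log (a * x + b))
      (exp (-(lam * x)) * (a / (a * x + b)) - lam * (exp (-(lam * x)) * log (a * x + b))) x := by
  have h_exp : HasDerivAt (fun x => exp (-(lam * x))) (exp (-(lam * x)) * -lam) x := by
    simpa using ((hasDerivAt_id x).const_mul lam).neg.exp
  have h_log : HasDerivAt (fun x => log (a * x + b)) (a / (a * x + b)) x := by
    simpa using (((hasDerivAt_id x).const_mul a).add_const b).log hx
  exact (h_exp.mul h_log).congr_deriv (by ring)

section Substitution

variable {E : Type*} [NormedAddCommGroup E] [NormedSpace ℝ E]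

lemma integral_Ioi_comp_add_right (g : ℝ → E) (a c : ℝ) :
    ∫ x in Ioi a, g (x + c) = ∫ t in Ioi (a + c), g t := by
  have h := (measurePreserving_add_right volume c).setIntegral_preimage_emb
    (MeasurableEquiv.addRight c).measurableEmbedding g (Ioi (a + c))
  rwa [preimage_add_const_Ioi, add_sub_cancel_right] at h

lemma integral_Ioi_comp_mul_add (g : ℝ → E) (c : ℝ) {lam : ℝ} (hlam : 0 < lam) :
    ∫ x in Ioi 0, g (lam * x + c) = lam⁻¹ • ∫ t in Ioi c, g t := by
  rw [integral_comp_mul_left_Ioi (fun y => g (y + c)) 0 hlam, mul_zero,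
    integral_Ioi_comp_add_right, zero_add]

end Substitution

lemma integral_exp_neg_mul_mul_div_mul_add {lam a : ℝ} (b : ℝ) (hlam : 0 < lam) (ha : a ≠ 0) :
    ∫ x in Ioi 0, exp (-(lam * x)) * (a / (a * x + b))
      = exp (lam * b / a) * ∫ t in Ioi (lam * b / a), t⁻¹ * exp (-t) := by
  rw [← mul_inv_cancel_left₀ hlam.ne' (∫ t in Ioi (lam * b / a), t⁻¹ * exp (-t)),
    ← smul_eq_mul lam⁻¹, ← integral_Ioi_comp_mul_add _ _ hlam, ← integral_const_mul,
    ← integral_const_mul]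
  congr 1 with x
  have h_arg : lam * x + lam * b / a = lam / a * (a * x + b) := by field_simp
  have h_exp : exp (-(lam * x + lam * b / a)) = exp (-(lam * x)) * (exp (lam * b / a))⁻¹ := by
    rw [← exp_neg, ← exp_add]; ring_nf
  simp only [h_exp]
  rw [h_arg, mul_inv, inv_div]
  field_simp

/-- `E[ln(aX+b)] = ln b + e^{λb/a} E₁(λb/a)` for an exponential random variable `X`
with rate `λ`. -/
theorem exp_mean_log (lam a b : ℝ) (hlam : 0 < lam) (ha : 0 < a) (hb : 0 < b) :
    ∫ x in Set.Ioi (0 : ℝ), lam * Real.exp (-(lam * x)) * Real.log (a * x + b)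
      = Real.log b
        + Real.exp (lam * b / a) * ∫ t in Set.Ioi (lam * b / a), t⁻¹ * Real.exp (-t) := by
  have h_pos : ∀ x ∈ Ici (0 : ℝ), 0 < a * x + b := fun x (hx : 0 ≤ x) => by positivity
  have h_log_growth := isBigO_log_mul_add_exp ha b (half_pos hlam)
  have h_log : IntegrableOn (fun x => exp (-(lam * x)) * log (a * x + b)) (Ioi 0) :=
    integrableOn_exp_neg_mul_mul (half_lt_self hlam)
      (ContinuousOn.log (by fun_prop) fun x hx => (h_pos x hx).ne') h_log_growth
  have h_div : IntegrableOn (fun x => exp (-(lam * x)) * (a / (a * x + b))) (Ioi 0) :=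
    integrableOn_exp_neg_mul_mul hlam
      (continuousOn_const.div (by fun_prop) fun x hx => (h_pos x hx).ne')
      (isBigO_div_mul_add_exp_zero ha b)
  have h_parts := integral_Ioi_of_hasDerivAt_of_tendsto'
    (fun x hx => hasDerivAt_exp_neg_mul_mul_log lam a b (h_pos x hx).ne')
    (h_div.sub (h_log.const_mul lam))
    (tendsto_exp_neg_mul_mul_atTop (half_lt_self hlam) h_log_growth)
  rw [integral_sub h_div (h_log.const_mul lam), integral_const_mul,
    integral_exp_neg_mul_mul_div_mul_add b hlam ha.ne'] at h_parts
  simp only [mul_zero, neg_zero, exp_zero, zero_add, one_mul, zero_sub] at h_parts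
  simp only [mul_assoc, integral_const_mul]
  linarith
end

section
/- Let s² > 0, c > 0, 𝕹 > 0, and let X be a real random variable with the exponential distribution of mean s² (density (1/s²)e^{−x/s²} on [0,∞)). Then E[ cX / (cX + 𝕹) ] = 1 − ρ · e^{ρ} · E₁(ρ), where ρ = 𝕹/(c·s²) and E₁(z) = ∫_z^∞ t^{−1} e^{−t} dt. -/
/-!
Writing `X = s² Y` with `Y` a standard exponential variable, `c X / (c X + 𝕹) = 1 - ρ / (Y + ρ)`,
and `E[1 / (Y + ρ)] = ∫₀^∞ e^{-y} / (y + ρ) dy = e^ρ E₁(ρ)` by the shift `t = y + ρ`.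
-/

open MeasureTheory ProbabilityTheory Real Set

theorem integral_comp_add_right_Ioi {E : Type*} [NormedAddCommGroup E] [NormedSpace ℝ E]
    (g : ℝ → E) (a d : ℝ) :
    ∫ x in Ioi a, g (x + d) = ∫ x in Ioi (a + d), g x := by
  rw [← integral_indicator measurableSet_Ioi, ← integral_indicator measurableSet_Ioi,
    ← integral_add_right_eq_self ((Ioi (a + d)).indicator g) d]
  congr 1 with x
  simp only [indicator, mem_Ioi, add_lt_add_iff_right]

theorem integral_expMeasure {E : Type*} [NormedAddCommGroup E] [NormedSpace ℝ E]
    {r : ℝ} (hr : 0 < r) (f : ℝ → E) :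
    ∫ x, f x ∂expMeasure r = ∫ y in Ioi 0, exp (-y) • f (y / r) := by
  have hdensity : ∀ x, (gammaPDF 1 r x).toReal • f x
      = (Ici 0).indicator (fun x ↦ r • exp (-(r * x)) • f x) x := by
    intro x
    rw [gammaPDF, ENNReal.toReal_ofReal (gammaPDFReal_nonneg one_pos hr x), gammaPDFReal]
    by_cases hx : 0 ≤ x <;> simp [hx, smul_smul]
  have hscale := integral_comp_mul_left_Ioi (fun y ↦ exp (-y) • f (y / r)) 0 hr
  simp only [mul_zero, mul_div_cancel_left₀ _ hr.ne'] at hscale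
  rw [expMeasure, gammaMeasure, integral_withDensity_eq_integral_toReal_smul (f := gammaPDF 1 r)
      (measurable_gammaPDFReal 1 r).ennreal_ofReal (by simp [gammaPDF]) f]
  simp only [hdensity]
  rw [integral_indicator measurableSet_Ici, integral_Ici_eq_integral_Ioi, integral_smul, hscale,
    smul_inv_smul₀ hr.ne']

theorem integral_exp_neg_div_add_Ioi (ρ : ℝ) :
    ∫ y in Ioi 0, exp (-y) / (y + ρ) = exp ρ * ∫ t in Ioi ρ, t⁻¹ * exp (-t) := by
  have hshift : ∀ y, exp (-y) / (y + ρ) = exp ρ * ((y + ρ)⁻¹ * exp (-(y + ρ))) := fun y ↦ by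
    rw [neg_add, exp_add, exp_neg ρ]
    field_simp
  simp only [hshift, integral_const_mul]
  rw [integral_comp_add_right_Ioi (fun t ↦ t⁻¹ * exp (-t)), zero_add]

theorem integrableOn_exp_neg_div_add_Ioi {ρ : ℝ} (hρ : 0 < ρ) :
    IntegrableOn (fun y ↦ exp (-y) / (y + ρ)) (Ioi 0) := by
  refine ((integrableOn_exp_neg_Ioi 0).const_mul ρ⁻¹).mono'
    (by fun_prop : Measurable _).aestronglyMeasurable ?_
  filter_upwards [ae_restrict_mem measurableSet_Ioi] with y (hy : 0 < y)
  rw [Real.norm_of_nonneg (by positivity), inv_mul_eq_div]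
  exact div_le_div_of_nonneg_left (exp_pos _).le hρ (by linarith)

theorem mean_optimal_dpc_parameter_general {Ω : Type*} [MeasurableSpace Ω] (μ : Measure Ω)
    (s2 c 𝕹 : ℝ) (hs2 : 0 < s2) (hc : 0 < c) (h𝕹 : 0 < 𝕹)
    (X : Ω → ℝ) (hX : Measurable X)
    (hlaw : μ.map X = expMeasure (1 / s2))
    (ρ : ℝ) (hρ : ρ = 𝕹 / (c * s2)) :
    μ[fun ω => c * X ω / (c * X ω + 𝕹)]
      = 1 - ρ * Real.exp ρ * ∫ t in Set.Ioi ρ, t⁻¹ * Real.exp (-t) := by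
  have hρ_pos : 0 < ρ := hρ ▸ by positivity
  have hintegrand : ∀ y ∈ Ioi (0 : ℝ),
      exp (-y) • (c * (y / (1 / s2)) / (c * (y / (1 / s2)) + 𝕹))
        = exp (-y) - ρ * (exp (-y) / (y + ρ)) := fun y (hy : 0 < y) ↦ by
    rw [smul_eq_mul, hρ]
    field_simp
    ring
  calc μ[fun ω => c * X ω / (c * X ω + 𝕹)]
      = ∫ x, c * x / (c * x + 𝕹) ∂expMeasure (1 / s2) := by
        rw [← hlaw,
          integral_map hX.aemeasurable (by fun_prop : Measurable _).aestronglyMeasurable]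
    _ = ∫ y in Ioi 0, (exp (-y) - ρ * (exp (-y) / (y + ρ))) := by
        rw [integral_expMeasure (by positivity), setIntegral_congr_fun measurableSet_Ioi hintegrand]
    _ = 1 - ρ * (exp ρ * ∫ t in Ioi ρ, t⁻¹ * exp (-t)) := by
        rw [integral_sub (integrableOn_exp_neg_Ioi 0)
            ((integrableOn_exp_neg_div_add_Ioi hρ_pos).const_mul ρ), integral_const_mul,
          integral_exp_neg_Ioi_zero, integral_exp_neg_div_add_Ioi]
    _ = _ := by ring

/-- Mean optimal DPC parameter over Rayleigh fading: if `X` is exponential with mean `s²`,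
then `E[cX/(cX+𝕹)] = 1 − ρ e^ρ E₁(ρ)` with `ρ = 𝕹/(c·s²)`. -/
theorem mean_optimal_dpc_parameter {Ω : Type*} [MeasurableSpace Ω] (μ : Measure Ω)
    [IsProbabilityMeasure μ]
    (s2 c 𝕹 : ℝ) (hs2 : 0 < s2) (hc : 0 < c) (h𝕹 : 0 < 𝕹)
    (X : Ω → ℝ) (hX : Measurable X)
    (hlaw : μ.map X = expMeasure (1 / s2))
    (ρ : ℝ) (hρ : ρ = 𝕹 / (c * s2)) :
    μ[fun ω => c * X ω / (c * X ω + 𝕹)]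
      = 1 - ρ * Real.exp ρ * ∫ t in Set.Ioi ρ, t⁻¹ * Real.exp (-t) :=
  mean_optimal_dpc_parameter_general μ s2 c 𝕹 hs2 hc h𝕹 X hX hlaw ρ hρ
end
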